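/- Adopt the Grid setup. Then for every j ∈ {1,…,K}, l ∈ {1,…,K'}, every x with a_{jl} + L/(5K') < x ≤ a_{j(l+1)} − L/(5K'), and every pair (t,s) ∈ {1,…,K}×{1,…,K'} with (t,s) ≠ (j,l), one has exp(−(x−μ_{ts})²/(2σ²) + (x−μ_{jl})²/(2σ²)) ≤ exp(−K'/30). -/

import Mathlib

open MeasureTheory

noncomputable section

/-- Width `L = (b-a)/K` of the coarse grid. -/
def gL (a b : ℝ) (K : ℕ) : ℝ := (b - a) / K

/-- Left endpoint `a_{jl} = a + (j-1)L + (l-1)L/K'` of the `(j,l)`-th subinterval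
(0-indexed: `j : Fin K`, `l : Fin K'`). -/
def gA (a b : ℝ) (K K' : ℕ) (j : Fin K) (l : Fin K') : ℝ :=
  a + (j : ℕ) * gL a b K + (l : ℕ) * gL a b K / K'

/-- Midpoint `c_{jl}` of the `(j,l)`-th subinterval. -/
def gC (a b : ℝ) (K K' : ℕ) (j : Fin K) (l : Fin K') : ℝ :=
  gA a b K K' j l + gL a b K / (2 * K')

/-- The Gaussian softmax weight `π_{jl}(x)`. -/
def gPi (a b : ℝ) (K K' : ℕ) (μ : Fin K → Fin K' → ℝ) (σ2 : ℝ)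
    (j : Fin K) (l : Fin K') (x : ℝ) : ℝ :=
  Real.exp (-(x - μ j l) ^ 2 / (2 * σ2)) /
    ∑ t : Fin K, ∑ s : Fin K', Real.exp (-(x - μ t s) ^ 2 / (2 * σ2))

end

/-!
Write `d = L/K'` for the width of a subinterval. The midpoints sit at `a + (n + 1/2) d`, where
`n = K' j + l` enumerates the subintervals, so distinct midpoints are at least `d` apart.
A point `x` in the middle `3/5` of the `(j,l)`-th subinterval is then within `3d/10 + d/6 = 7d/15`
of `μ_{jl}` and at least `d - 7d/15 = 8d/15` away from every other mean, so the exponent is at most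
`-((8/15)² - (7/15)²) d² / (2σ²) = -d² / (30σ²) ≤ -K'/30`, using `σ² ≤ d²/K'`.
-/

open Real

lemma le_abs_sub_of_le_abs_sub {x μ c₁ c₂ R ε δ : ℝ} (hR : R ≤ |c₂ - c₁|)
    (hx : |x - c₁| ≤ ε) (hμ : |μ - c₂| ≤ δ) : R - ε - δ ≤ |x - μ| := by
  have h₁ := abs_sub_le c₂ μ c₁
  have h₂ := abs_sub_le μ x c₁
  rw [abs_sub_comm c₂ μ] at h₁
  rw [abs_sub_comm μ x] at h₂
  linarith

lemma neg_sq_div_add_sq_div_le {x μ₁ μ₂ r R c : ℝ} (hc : 0 ≤ c) (hR : 0 ≤ R)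
    (h₁ : |x - μ₁| ≤ r) (h₂ : R ≤ |x - μ₂|) :
    -(x - μ₂) ^ 2 / c + (x - μ₁) ^ 2 / c ≤ -(R ^ 2 - r ^ 2) / c := by
  have hsq₁ : (x - μ₁) ^ 2 ≤ r ^ 2 := sq_le_sq' (abs_le.mp h₁).1 (abs_le.mp h₁).2
  have hsq₂ : R ^ 2 ≤ (x - μ₂) ^ 2 := by
    simpa only [sq_abs] using pow_le_pow_left₀ hR h₂ 2
  rw [← add_div]
  exact div_le_div_of_nonneg_right (by linarith) hc

section Grid

variable {a b : ℝ} {K K' : ℕ}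

lemma gA_eq_add_index_mul (hK' : K' ≠ 0) (j : Fin K) (l : Fin K') :
    gA a b K K' j l = a + (finProdFinEquiv (j, l) : ℕ) * (gL a b K / K') := by
  simp only [gA, finProdFinEquiv_apply_val]
  push_cast
  field_simp
  ring

lemma gC_eq_gA_add (j : Fin K) (l : Fin K') :
    gC a b K K' j l = gA a b K K' j l + gL a b K / K' / 2 := by
  rw [gC, div_div, mul_comm (2 : ℝ)]

lemma le_abs_gC_sub_gC (hK' : K' ≠ 0) (hL : 0 ≤ gL a b K) {j t : Fin K} {l s : Fin K'}
    (hne : (t, s) ≠ (j, l)) :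
    gL a b K / K' ≤ |gC a b K K' t s - gC a b K K' j l| := by
  set m : ℤ := (finProdFinEquiv (t, s) : ℕ) - (finProdFinEquiv (j, l) : ℕ)
  have hm : m ≠ 0 := sub_ne_zero.mpr <| Nat.cast_injective.ne <|
    Fin.val_injective.ne <| finProdFinEquiv.injective.ne hne
  have hm_abs : (1 : ℝ) ≤ |(m : ℝ)| := by exact_mod_cast Int.one_le_abs hm
  have hdiff : gC a b K K' t s - gC a b K K' j l = m * (gL a b K / K') := by
    simp only [gC_eq_gA_add, gA_eq_add_index_mul hK', m]
    push_cast
    ring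
  have hd : 0 ≤ gL a b K / K' := div_nonneg hL K'.cast_nonneg
  rw [hdiff, abs_mul, abs_of_nonneg hd]
  exact le_mul_of_one_le_left hd hm_abs

lemma abs_sub_gC_le {j : Fin K} {l : Fin K'} {x : ℝ}
    (hx₁ : gA a b K K' j l + gL a b K / (5 * K') < x)
    (hx₂ : x ≤ gA a b K K' j l + gL a b K / K' - gL a b K / (5 * K')) :
    |x - gC a b K K' j l| ≤ 3 * (gL a b K / K') / 10 := by
  rw [mul_comm, ← div_div] at hx₁ hx₂
  rw [gC_eq_gA_add, abs_le]
  constructor <;> linarith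

end Grid

theorem stmt5 (a b : ℝ) (hab : a < b) (K K' : ℕ)
    (μ : Fin K → Fin K' → ℝ)
    (hμ : ∀ j l, |μ j l - gC a b K K' j l| ≤ gL a b K / (6 * K'))
    (σ2 : ℝ) (hσl : gL a b K ^ 2 / (2 * (K' : ℝ) ^ 3) ≤ σ2)
    (hσu : σ2 ≤ gL a b K ^ 2 / (K' : ℝ) ^ 3) :
    ∀ (j : Fin K) (l : Fin K') (x : ℝ),
      gA a b K K' j l + gL a b K / (5 * K') < x →
      x ≤ gA a b K K' j l + gL a b K / K' - gL a b K / (5 * K') →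
      ∀ (t : Fin K) (s : Fin K'), (t, s) ≠ (j, l) →
        Real.exp (-(x - μ t s) ^ 2 / (2 * σ2) + (x - μ j l) ^ 2 / (2 * σ2))
          ≤ Real.exp (-(K' : ℝ) / 30) := by
  intro j l x hx₁ hx₂ t s hne
  have hK' : (0 : ℝ) < K' := Nat.cast_pos.mpr l.pos
  have hL : 0 < gL a b K := div_pos (sub_pos.mpr hab) (Nat.cast_pos.mpr j.pos)
  have hx := abs_sub_gC_le hx₁ hx₂
  have hsep := le_abs_gC_sub_gC l.pos.ne' hL.le hne
  set d := gL a b K / K' with hd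
  have hσ_pos : 0 < σ2 := lt_of_lt_of_le (by positivity) hσl
  have hσ_le : K' * σ2 ≤ d ^ 2 := by
    have hσu' : σ2 ≤ d ^ 2 / K' := by
      convert hσu using 1
      rw [hd]
      field_simp
    rwa [le_div_iff₀ hK', mul_comm] at hσu'
  have hμ' : ∀ t s, |μ t s - gC a b K K' t s| ≤ d / 6 := fun t s ↦ by
    simpa only [hd, div_div, mul_comm] using hμ t s
  have hnear : |x - μ j l| ≤ 7 * d / 15 := by
    have := abs_sub_le x (gC a b K K' j l) (μ j l)
    rw [abs_sub_comm (gC a b K K' j l)] at this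
    linarith [hμ' j l]
  have hfar : 8 * d / 15 ≤ |x - μ t s| := by
    linarith [le_abs_sub_of_le_abs_sub hsep hx (hμ' t s)]
  rw [exp_le_exp]
  calc _ ≤ -((8 * d / 15) ^ 2 - (7 * d / 15) ^ 2) / (2 * σ2) :=
        neg_sq_div_add_sq_div_le (by positivity) (by positivity) hnear hfar
    _ = -(d ^ 2 / σ2) / 30 := by ring
    _ ≤ -K' / 30 := by
      gcongr
      rwa [le_div_iff₀ hσ_pos]
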